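/- arXiv:2011.09836 — 2 statements merged into one kernel-verified Lean document; each statement's English description precedes it below -/
import Mathlib

section
/- For an ELI TBox T in normal form and an ABox A consistent with T, and for any concept assertion B(a) with a an individual of A: T, A ⊨ B(a) if and only if B(a) belongs to the completion A^c_T of A (the least fixpoint of the completion rules applied only to individuals of A). Moreover, T, A ⊨ r(a,b) for a,b individuals of A iff r(a,b) is already derivable from A using only the role inclusions of T. -/
structure ABox (I C R : Type) where
  conc : Set (C × I)
  role : Set (R × I × I)

def ABox.Ind {I C R : Type} (A : ABox I C R) : Set I :=
  {a | (∃ c, (c, a) ∈ A.conc) ∨ (∃ r b, (r, a, b) ∈ A.role ∨ (r, b, a) ∈ A.role)}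

structure Interp (D I C R : Type) where
  ind : I → D
  concI : C → Set D
  roleI : R → Set (D × D)

def Interp.ModelOf {D I C R : Type} (M : Interp D I C R) (A : ABox I C R) : Prop :=
  (∀ p ∈ A.conc, M.ind p.2 ∈ M.concI p.1) ∧
  (∀ p ∈ A.role, (M.ind p.2.1, M.ind p.2.2) ∈ M.roleI p.1)

structure CQ (V C R : Type) (n : ℕ) where
  conc : Set (C × V)
  role : Set (R × V × V)
  ans : Fin n → V

def CQ.Match {D V C R : Type} {n : ℕ} (q : CQ V C R n)
    (cI : C → Set D) (rI : R → Set (D × D)) (f : V → D) : Prop :=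
  (∀ p ∈ q.conc, f p.2 ∈ cI p.1) ∧
  (∀ p ∈ q.role, (f p.2.1, f p.2.2) ∈ rI p.1)

/-- An abstract TBox, given by its class of models. -/
abbrev TBoxSem (C R : Type) : Type 1 :=
  ∀ D : Type, (C → Set D) → (R → Set (D × D)) → Prop

def ConsistentWith {I C R : Type} (T : TBoxSem C R) (A : ABox I C R) : Prop :=
  ∃ (D : Type) (M : Interp D I C R), T D M.concI M.roleI ∧ M.ModelOf A

/-- `a` is a certain answer to the OMQ `(T, q)` on the ABox `A`. -/
def CertAns {I C R V : Type} {n : ℕ} (T : TBoxSem C R) (A : ABox I C R)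
    (q : CQ V C R n) (a : Fin n → I) : Prop :=
  ∀ (D : Type) (M : Interp D I C R), T D M.concI M.roleI → M.ModelOf A →
    ∃ f : V → D, q.Match M.concI M.roleI f ∧ ∀ i, f (q.ans i) = M.ind (a i)

/-- The concept assertion `B(a)` is entailed by `T` and `A`. -/
def CertConc {I C R : Type} (T : TBoxSem C R) (A : ABox I C R) (B : C) (a : I) : Prop :=
  ∀ (D : Type) (M : Interp D I C R), T D M.concI M.roleI → M.ModelOf A →
    M.ind a ∈ M.concI B

/-- A role: a role name or an inverse role. -/
inductive DLRole (R : Type) : Type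
  | name : R → DLRole R
  | inv : R → DLRole R

def roleExt {R D : Type} (rI : R → Set (D × D)) : DLRole R → Set (D × D)
  | .name r => rI r
  | .inv r => {p | (p.2, p.1) ∈ rI r}

/-- Role assertions of an ABox, for possibly inverse roles. -/
def ABox.rext {I C R : Type} (A : ABox I C R) : DLRole R → I → I → Prop
  | .name r, a, b => (r, a, b) ∈ A.role
  | .inv r, a, b => (r, b, a) ∈ A.role

/-- ELIHF⊥ TBox axioms in normal form:
`A ⊑ ⊥`, `A ⊑ ∃r.B`, `⊤ ⊑ A`, `B₁ ⊓ B₂ ⊑ A`, `∃r.B ⊑ A`,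
functionality assertions and role inclusions. -/
inductive NAx (C R : Type) : Type
  | subBot : C → NAx C R
  | subEx : C → DLRole R → C → NAx C R
  | topSub : C → NAx C R
  | conjSub : C → C → C → NAx C R
  | exSub : DLRole R → C → C → NAx C R
  | func : DLRole R → NAx C R
  | ri : DLRole R → DLRole R → NAx C R

def NAx.Sat {C R D : Type} (cI : C → Set D) (rI : R → Set (D × D)) : NAx C R → Prop
  | .subBot A => ∀ d, d ∉ cI A
  | .subEx A r B => ∀ d ∈ cI A, ∃ e, (d, e) ∈ roleExt rI r ∧ e ∈ cI B
  | .topSub A => ∀ d, d ∈ cI A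
  | .conjSub B1 B2 A => ∀ d, d ∈ cI B1 → d ∈ cI B2 → d ∈ cI A
  | .exSub r B A => ∀ d e, (d, e) ∈ roleExt rI r → e ∈ cI B → d ∈ cI A
  | .func r => ∀ d e e', (d, e) ∈ roleExt rI r → (d, e') ∈ roleExt rI r → e = e'
  | .ri r s => ∀ p ∈ roleExt rI r, p ∈ roleExt rI s

abbrev NTBox (C R : Type) : Type := List (NAx C R)

def NTBox.sem {C R : Type} (T : NTBox C R) : TBoxSem C R :=
  fun _ cI rI => ∀ ax ∈ T, NAx.Sat cI rI ax

/-- An `ELI` axiom in normal form: no functionality assertions, no role inclusions. -/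
def NAx.IsELI {C R : Type} : NAx C R → Prop
  | .func _ => False
  | .ri _ _ => False
  | _ => True

/-- Derivability of concept assertions at individuals of `A` via the completion rules
(the last rule is rule (vii): local semantic entailment from already derived assertions). -/
inductive CompDer {I C R : Type} (T : NTBox C R) (A : ABox I C R) : C → I → Prop
  | base {B : C} {a : I} : (B, a) ∈ A.conc → CompDer T A B a
  | top {B : C} {a : I} : NAx.topSub B ∈ T → a ∈ A.Ind → CompDer T A B a
  | conj {B₁ B₂ B : C} {a : I} : NAx.conjSub B₁ B₂ B ∈ T →
      CompDer T A B₁ a → CompDer T A B₂ a → CompDer T A B a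
  | exl {r : DLRole R} {B B' : C} {a b : I} : NAx.exSub r B B' ∈ T →
      A.rext r a b → CompDer T A B b → CompDer T A B' a
  | loc {B : C} {a : I} (S : Set C) : a ∈ A.Ind →
      (∀ B' ∈ S, CompDer T A B' a) →
      (∀ (D : Type) (cI : C → Set D) (rI : R → Set (D × D)),
        (∀ ax ∈ T, NAx.Sat cI rI ax) →
        ∀ d : D, (∀ B' ∈ S, d ∈ cI B') → d ∈ cI B) →
      CompDer T A B a

/-!
The completion rules are sound, and for the converse one builds a single model of `T` and `A`
satisfying nothing beyond what is derivable. Its elements are the individuals of `A`, labelled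
with the entailment closure of their derived concepts, and the sets `X` of concepts realizable in
some model of `T`, labelled with the closure of `X`. When a label contains `A₀` with
`A₀ ⊑ ∃r.B`, there is an edge to the node made of `B` and the concepts that the axioms
`∃r⁻.B' ⊑ A'` push down from the parent; that node is realizable because the parent's label is
(for an individual, by a model of `T` and `A`). As labels are closed under entailment, the axioms
`∃r.B' ⊑ A'` then also hold along these edges. Between individuals there are no role edges
besides those of `A`.
-/

variable {I C R : Type}

namespace DLRole

def converse : DLRole R → DLRole R
  | .name r => .inv r
  | .inv r => .name r

@[simp] lemma converse_converse (t : DLRole R) : t.converse.converse = t := by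
  cases t <;> rfl

lemma mem_roleExt_converse {D : Type} (rI : R → Set (D × D)) (t : DLRole R) (d e : D) :
    (d, e) ∈ roleExt rI t.converse ↔ (e, d) ∈ roleExt rI t := by
  cases t <;> rfl

end DLRole

namespace NTBox

variable (T : NTBox C R)

def closure (S : Set C) : Set C :=
  {B | ∀ (D : Type) (cI : C → Set D) (rI : R → Set (D × D)), T.sem D cI rI →
    ∀ d, (∀ B' ∈ S, d ∈ cI B') → d ∈ cI B}

def Realizable (S : Set C) : Prop :=
  ∃ (D : Type) (cI : C → Set D) (rI : R → Set (D × D)), T.sem D cI rI ∧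
    ∃ d, ∀ B ∈ S, d ∈ cI B

def Demands (X : Set C) (t : DLRole R) (B : C) : Prop :=
  ∃ A₀ ∈ X, NAx.subEx A₀ t B ∈ T

/-- What a `t`-successor satisfying `B` of a point satisfying `X` must satisfy by the axioms
`∃t⁻.B' ⊑ A'`. -/
def successorType (t : DLRole R) (B : C) (X : Set C) : Set C :=
  insert B {A' | ∃ B' ∈ X, NAx.exSub t.converse B' A' ∈ T}

variable {T}

lemma subset_closure (S : Set C) : S ⊆ T.closure S :=
  fun _ hB _ _ _ _ _ hd => hd _ hB

lemma closure_closure (S : Set C) : T.closure (T.closure S) ⊆ T.closure S :=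
  fun _ hB D cI rI hT d hd => hB D cI rI hT d fun _ hB' => hB' D cI rI hT d hd

lemma mem_closure_of_topSub {B : C} (hB : NAx.topSub B ∈ T) (S : Set C) : B ∈ T.closure S :=
  fun _ _ _ hT d _ => hT _ hB d

lemma Realizable.closure {S : Set C} (hS : T.Realizable S) : T.Realizable (T.closure S) :=
  let ⟨D, cI, rI, hT, d, hd⟩ := hS
  ⟨D, cI, rI, hT, d, fun _ hB => hB D cI rI hT d hd⟩

lemma exists_successor {D : Type} {cI : C → Set D} {rI : R → Set (D × D)} (hT : T.sem D cI rI)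
    {X : Set C} {t : DLRole R} {B : C} (hdem : T.Demands X t B) {d : D}
    (hd : ∀ B' ∈ X, d ∈ cI B') :
    ∃ e, (d, e) ∈ roleExt rI t ∧ ∀ B' ∈ T.successorType t B X, e ∈ cI B' := by
  obtain ⟨A₀, hA₀, hax⟩ := hdem
  obtain ⟨e, hde, heB⟩ := hT _ hax d (hd A₀ hA₀)
  refine ⟨e, hde, ?_⟩
  rintro B' (rfl | ⟨B'', hB'', hax'⟩)
  · exact heB
  · exact hT _ hax' e d ((DLRole.mem_roleExt_converse rI t e d).mpr hde) (hd B'' hB'')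

lemma Realizable.successorType {X : Set C} {t : DLRole R} {B : C} (hX : T.Realizable X)
    (hdem : T.Demands X t B) : T.Realizable (T.successorType t B X) :=
  let ⟨D, cI, rI, hT, _, hd⟩ := hX
  let ⟨e, _, he⟩ := exists_successor hT hdem hd
  ⟨D, cI, rI, hT, e, he⟩

lemma mem_closure_of_exSub_successor {X : Set C} {t : DLRole R} {B B' A' : C}
    (hax : NAx.exSub t B' A' ∈ T) (hdem : T.Demands X t B)
    (hB' : B' ∈ T.closure (T.successorType t B X)) : A' ∈ T.closure X := by
  intro D cI rI hT d hd
  obtain ⟨e, hde, he⟩ := exists_successor hT hdem hd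
  exact hT _ hax d e hde (hB' D cI rI hT e he)

end NTBox

namespace CompDer

variable {T : NTBox C R} {A : ABox I C R}

lemma sound {B : C} {a : I} (h : CompDer T A B a) {D : Type} (M : Interp D I C R)
    (hT : T.sem D M.concI M.roleI) (hM : M.ModelOf A) : M.ind a ∈ M.concI B := by
  induction h with
  | base h => exact hM.1 _ h
  | top hax _ => exact hT _ hax _
  | conj hax _ _ ih₁ ih₂ => exact hT _ hax _ ih₁ ih₂
  | @exl r _ _ _ b hax hr _ ih =>
    refine hT _ hax _ (M.ind b) ?_ ih
    cases r with
    | name s => exact hM.2 (s, _, b) hr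
    | inv s => exact hM.2 (s, b, _) hr
  | loc S _ _ hsem ih => exact hsem D M.concI M.roleI hT _ ih

lemma of_mem_closure {B : C} {a : I} (ha : a ∈ A.Ind)
    (hB : B ∈ T.closure {B' | CompDer T A B' a}) : CompDer T A B a :=
  .loc _ ha (fun _ h => h) hB

end CompDer

lemma ABox.rext_mem_ind_right {A : ABox I C R} {t : DLRole R} {a b : I} (h : A.rext t a b) :
    b ∈ A.Ind := by
  cases t with
  | name s => exact Or.inr ⟨s, a, Or.inr h⟩
  | inv s => exact Or.inr ⟨s, a, Or.inl h⟩

namespace Canonical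

variable (T : NTBox C R) (A : ABox I C R)

abbrev Node (I : Type) (T : NTBox C R) : Type := I ⊕ {X : Set C // T.Realizable X}

def label : Node I T → Set C
  | .inl a => T.closure {B | CompDer T A B a}
  | .inr X => T.closure X.1

def treeEdge (t : DLRole R) : Node I T → Node I T → Prop
  | x, .inr X => ∃ B, T.Demands (label T A x) t B ∧ X.1 = T.successorType t B (label T A x)
  | _, .inl _ => False

def aboxEdge (t : DLRole R) : Node I T → Node I T → Prop
  | .inl a, .inl b => A.rext t a b
  | _, _ => False

def edge (t : DLRole R) (x y : Node I T) : Prop :=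
  treeEdge T A t x y ∨ treeEdge T A t.converse y x ∨ aboxEdge T A t x y

def model : Interp (Node I T) I C R where
  ind := .inl
  concI B := {x | B ∈ label T A x}
  roleI r := {p | edge T A (.name r) p.1 p.2}

variable {T A}

lemma mem_roleExt_model {t : DLRole R} {x y : Node I T} :
    (x, y) ∈ roleExt (model T A).roleI t ↔ edge T A t x y := by
  cases t with
  | name r => rfl
  | inv r =>
    have habox : aboxEdge T A (.name r) y x ↔ aboxEdge T A (.inv r) x y := by
      cases x <;> cases y <;> rfl
    change edge T A _ y x ↔ edge T A _ x y
    simp only [edge, DLRole.converse, habox]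
    tauto

lemma modelOf_model : (model T A).ModelOf A :=
  ⟨fun _ hp => NTBox.subset_closure _ (CompDer.base hp), fun _ hp => Or.inr (Or.inr hp)⟩

lemma label_closure (x : Node I T) : T.closure (label T A x) ⊆ label T A x := by
  cases x <;> exact NTBox.closure_closure _

lemma label_realizable (hcons : ConsistentWith T.sem A) (x : Node I T) :
    T.Realizable (label T A x) := by
  cases x with
  | inl a =>
    obtain ⟨D, M, hT, hM⟩ := hcons
    exact NTBox.Realizable.closure ⟨D, M.concI, M.roleI, hT, M.ind a, fun _ h => h.sound M hT hM⟩
  | inr X => exact X.2.closure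

lemma sat_exSub {t : DLRole R} {B' A' : C}
    (hax : NAx.exSub t B' A' ∈ T) :
    NAx.Sat (model T A).concI (model T A).roleI (.exSub t B' A') := by
  intro x y hxy hy
  rcases mem_roleExt_model.mp hxy with hxy | hyx | hxy
  · obtain X | X := y
    · exact hxy.elim
    obtain ⟨B, hdem, hX⟩ := hxy
    refine label_closure x (NTBox.mem_closure_of_exSub_successor hax hdem ?_)
    rw [← hX]
    exact hy
  · obtain X | X := x
    · exact hyx.elim
    obtain ⟨B, -, hX⟩ := hyx
    refine NTBox.subset_closure X.1 ?_
    rw [hX]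
    exact Or.inr ⟨B', hy, by rwa [DLRole.converse_converse]⟩
  · obtain a | _ := x <;> obtain b | _ := y <;> try exact hxy.elim
    exact NTBox.subset_closure _ <| CompDer.exl hax hxy <|
      CompDer.of_mem_closure (ABox.rext_mem_ind_right hxy) hy

lemma sem_model (hELI : ∀ ax ∈ T, NAx.IsELI ax) (hcons : ConsistentWith T.sem A) :
    T.sem (Node I T) (model T A).concI (model T A).roleI := by
  intro ax hax
  cases ax with
  | subBot A₀ =>
    intro x hx
    obtain ⟨D, cI, rI, hT, d, hd⟩ := label_realizable hcons x
    exact hT _ hax d (hd A₀ hx)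
  | subEx A₀ t B =>
    intro x hx
    have hdem : T.Demands (label T A x) t B := ⟨A₀, hx, hax⟩
    refine ⟨.inr ⟨_, (label_realizable hcons x).successorType hdem⟩, ?_, ?_⟩
    · exact mem_roleExt_model.mpr (Or.inl ⟨B, hdem, rfl⟩)
    · exact NTBox.subset_closure _ (Set.mem_insert B _)
  | topSub A₀ =>
    intro x
    cases x <;> exact NTBox.mem_closure_of_topSub hax _
  | conjSub B₁ B₂ A₀ =>
    intro x h₁ h₂
    exact label_closure x fun D cI rI hT d hd => hT _ hax d (hd B₁ h₁) (hd B₂ h₂)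
  | exSub t B' A' => exact sat_exSub hax
  | func _ => exact (hELI _ hax).elim
  | ri _ _ => exact (hELI _ hax).elim

end Canonical

/-- for an `ELI` TBox in normal form and a consistent ABox, entailed concept
assertions over ABox individuals are exactly those in the completion, and entailed role
assertions are exactly those already asserted. -/
theorem completion_characterizes_entailment {I C R : Type}
    (T : NTBox C R) (hELI : ∀ ax ∈ T, NAx.IsELI ax)
    (A : ABox I C R) (hcons : ConsistentWith (NTBox.sem T) A) :
    (∀ (B : C) (a : I), a ∈ A.Ind →
      (CertConc (NTBox.sem T) A B a ↔ CompDer T A B a)) ∧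
    (∀ (r : R) (a b : I), a ∈ A.Ind → b ∈ A.Ind →
      ((∀ (D : Type) (M : Interp D I C R), NTBox.sem T D M.concI M.roleI →
          M.ModelOf A → (M.ind a, M.ind b) ∈ M.roleI r) ↔ (r, a, b) ∈ A.role)) := by
  have hsem := Canonical.sem_model hELI hcons
  have hmodel := Canonical.modelOf_model (T := T) (A := A)
  refine ⟨fun B a ha => ⟨fun h => ?_, fun h D M hT hM => h.sound M hT hM⟩,
    fun r a b _ _ => ⟨fun h => ?_, fun h D M _ hM => hM.2 (r, a, b) h⟩⟩
  · exact CompDer.of_mem_closure ha (h _ _ hsem hmodel)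
  · rcases h _ _ hsem hmodel with h | h | h
    exacts [h.elim, h.elim, h]
end

section
/- Let T_c be an ELI TBox over signature Σ_c ∪ {A*} (A* ∉ Σ_c) such that for some fixed problem instance: there is an ABox A and individual a with T_c, A ⊨ A*(a) and T_c, A ⊭ q_c(a) iff the instance is positive. Extend T_c to T by adding ∃r.A ⊑ A and A ⊓ A* ⊑ C_{q_c}, with A, r fresh and C_{q_c} an ELI concept such that d ∈ C_{q_c}^I implies I ⊨ q_c(d). Then: if the instance is positive, the OMQ (T, Σ_c ∪ {A,r}, q_c) is not FO-rewritable, as witnessed by the family of ABoxes A_k obtained by attaching to the root a₀ of a tree-shaped witness A an r-path a₀ r a₁ r ... r a_k with A(a_k): each A_k entails q_c(a₀) but its truncation A_k|≤k−1 does not. -/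
structure Sig (C R : Type) where
  concs : Set C
  roles : Set R

def ABox.InSig {I C R : Type} (A : ABox I C R) (s : Sig C R) : Prop :=
  (∀ p ∈ A.conc, p.1 ∈ s.concs) ∧ (∀ p ∈ A.role, p.1 ∈ s.roles)

/-- An ABox viewed as an interpretation: concept name extensions. -/
def ABox.concI {I C R : Type} (A : ABox I C R) : C → Set I :=
  fun c => {a | (c, a) ∈ A.conc}

/-- An ABox viewed as an interpretation: role name extensions. -/
def ABox.roleI {I C R : Type} (A : ABox I C R) : R → Set (I × I) :=
  fun r => {p | (r, p.1, p.2) ∈ A.role}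

/-- First-order formulas over unary predicates `C`, binary predicates `R`, variables `X`. -/
inductive FO (X C R : Type) : Type
  | eq : X → X → FO X C R
  | cn : C → X → FO X C R
  | rl : R → X → X → FO X C R
  | fal : FO X C R
  | imp : FO X C R → FO X C R → FO X C R
  | all : X → FO X C R → FO X C R

def FO.Sat {X C R D : Type} [DecidableEq X]
    (cI : C → Set D) (rI : R → Set (D × D)) : FO X C R → (X → D) → Prop
  | .eq x y, v => v x = v y
  | .cn c x, v => v x ∈ cI c
  | .rl r x y, v => (v x, v y) ∈ rI r
  | .fal, _ => False
  | .imp φ ψ, v => FO.Sat cI rI φ v → FO.Sat cI rI ψ v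
  | .all x φ, v => ∀ d : D, FO.Sat cI rI φ (Function.update v x d)

/-- Quantifier rank. -/
def FO.qr {X C R : Type} : FO X C R → ℕ
  | .eq _ _ => 0
  | .cn _ _ => 0
  | .rl _ _ _ => 0
  | .fal => 0
  | .imp φ ψ => max (FO.qr φ) (FO.qr ψ)
  | .all _ φ => FO.qr φ + 1

/-- Free variables. -/
def FO.free {X C R : Type} [DecidableEq X] : FO X C R → Finset X
  | .eq x y => {x, y}
  | .cn _ x => {x}
  | .rl _ x y => {x, y}
  | .fal => ∅
  | .imp φ ψ => FO.free φ ∪ FO.free ψ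
  | .all x φ => (FO.free φ).erase x

def FO.InSig {X C R : Type} (s : Sig C R) : FO X C R → Prop
  | .eq _ _ => True
  | .cn c _ => c ∈ s.concs
  | .rl r _ _ => r ∈ s.roles
  | .fal => True
  | .imp φ ψ => FO.InSig s φ ∧ FO.InSig s ψ
  | .all _ φ => FO.InSig s φ

/-- `φ` is an FO-rewriting of the OMQ `(T, s, q)` (over `Σ`-ABoxes consistent with `T`). -/
def IsFORewriting {I C R V : Type} {n : ℕ} (T : TBoxSem C R) (s : Sig C R)
    (q : CQ V C R n) (φ : FO ℕ C R) : Prop :=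
  FO.InSig s φ ∧
  ∀ A : ABox I C R, A.InSig s → ConsistentWith T A →
    ∀ a : Fin n → I, CertAns T A q a ↔
      ∀ v : ℕ → I, (∀ i : Fin n, v i.1 = a i) → FO.Sat A.concI A.roleI φ v

def FORewritable (I : Type) {C R V : Type} {n : ℕ} (T : TBoxSem C R) (s : Sig C R)
    (q : CQ V C R n) : Prop :=
  ∃ φ : FO ℕ C R, IsFORewriting (I := I) T s q φ

def CQ.vars {V C R : Type} {n : ℕ} (q : CQ V C R n) : Set V :=
  {x | (∃ c, (c, x) ∈ q.conc) ∨ (∃ r y, (r, x, y) ∈ q.role ∨ (r, y, x) ∈ q.role)} ∪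
    Set.range q.ans

def CQ.adj {V C R : Type} {n : ℕ} (q : CQ V C R n) (x y : V) : Prop :=
  ∃ r, (r, x, y) ∈ q.role ∨ (r, y, x) ∈ q.role

def CQ.Connected {V C R : Type} {n : ℕ} (q : CQ V C R n) : Prop :=
  ∀ x ∈ q.vars, ∀ y ∈ q.vars, Relation.ReflTransGen q.adj x y

/-- `ELI` concepts. -/
inductive ELC (C R : Type) : Type
  | top : ELC C R
  | name : C → ELC C R
  | inter : ELC C R → ELC C R → ELC C R
  | ex : DLRole R → ELC C R → ELC C R

def ELC.ext {C R D : Type} (cI : C → Set D) (rI : R → Set (D × D)) : ELC C R → Set D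
  | .top => Set.univ
  | .name A => cI A
  | .inter c d => ELC.ext cI rI c ∩ ELC.ext cI rI d
  | .ex r c => {d | ∃ e, (d, e) ∈ roleExt rI r ∧ e ∈ ELC.ext cI rI c}

/-- A pseudo tree ABox: a core together with trees attached at core individuals. -/
structure PseudoTree (I C R : Type) extends ABox I C R where
  core : Set I
  parent : I → I
  depth : I → ℕ
  depth_zero : ∀ a, depth a = 0 ↔ a ∈ core
  parent_depth : ∀ a, depth a ≠ 0 → depth (parent a) + 1 = depth a
  edge_ok : ∀ r a b, (r, a, b) ∈ role →
    (a ∈ core ∧ b ∈ core) ∨ parent a = b ∨ parent b = a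
  single_edge : ∀ a, depth a ≠ 0 →
    Set.Subsingleton {p : R × Bool |
      (p.2 = true ∧ (p.1, parent a, a) ∈ role) ∨ (p.2 = false ∧ (p.1, a, parent a) ∈ role)}

/-- The restriction `A|_{≤ k}` of a pseudo tree ABox to individuals of depth at most `k`. -/
def PseudoTree.restrict {I C R : Type} (A : PseudoTree I C R) (k : ℕ) : ABox I C R where
  conc := {p ∈ A.conc | A.depth p.2 ≤ k}
  role := {p ∈ A.role | A.depth p.2.1 ≤ k ∧ A.depth p.2.2 ≤ k}

abbrev GTBox (C R : Type) : Type := List (ELC C R × ELC C R)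

def GTBox.sem {C R : Type} (T : GTBox C R) : TBoxSem C R :=
  fun _ cI rI => ∀ p ∈ T, ELC.ext cI rI p.1 ⊆ ELC.ext cI rI p.2

def DLRole.base {R : Type} : DLRole R → R
  | .name r => r
  | .inv r => r

def ELC.cnames {C R : Type} : ELC C R → Set C
  | .top => ∅
  | .name A => {A}
  | .inter c d => ELC.cnames c ∪ ELC.cnames d
  | .ex _ c => ELC.cnames c

def ELC.rnames {C R : Type} : ELC C R → Set R
  | .top => ∅
  | .name _ => ∅
  | .inter c d => ELC.rnames c ∪ ELC.rnames d
  | .ex r c => insert (DLRole.base r) (ELC.rnames c)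

def GTBox.cnames {C R : Type} (T : GTBox C R) : Set C :=
  {c | ∃ p ∈ T, c ∈ ELC.cnames p.1 ∪ ELC.cnames p.2}

def GTBox.rnames {C R : Type} (T : GTBox C R) : Set R :=
  {r | ∃ p ∈ T, r ∈ ELC.rnames p.1 ∪ ELC.rnames p.2}

/-!
On ABoxes without `A`-assertions the two added axioms are inert once `A` is read as empty and `r`
as total, so the truncations inherit the countermodel of the witness `W`. The same holds when `A`
sits at the end of an `r`-chain detached from `a₀`: that chain is collapsed into a sink satisfying
every `ELI` concept, and a match of the connected query `q` cannot reach the sink. Attaching the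
chain to `a₀` instead propagates `A` back to `a₀`, where `A ⊓ A*` forces `q(a₀)`.

An FO-rewriting, closed universally over its free variables other than the answer variable, has
some quantifier rank `m`, and it cannot tell the attached variant from the detached one once both
chains are longer than `2^m`: Duplicator copies moves near the bottom of the chains and swaps the
two chains near their tops, keeping the two kinds of pebbles more than `2^j` apart with `j` rounds
left.
-/

section Sink

variable {C R D : Type}

def sinkSet (S : Set D) : Set (Option D) := insert none (some '' S)

def sinkRel (S : Set (D × D)) : Set (Option D × Option D) :=
  insert (none, none) (Prod.map some some '' S)

@[simp] lemma none_mem_sinkSet (S : Set D) : none ∈ sinkSet S := Set.mem_insert _ _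

@[simp] lemma some_mem_sinkSet {S : Set D} {x : D} : some x ∈ sinkSet S ↔ x ∈ S := by
  simp [sinkSet]

@[simp] lemma none_none_mem_sinkRel (S : Set (D × D)) : (none, none) ∈ sinkRel S :=
  Set.mem_insert _ _

@[simp] lemma some_some_mem_sinkRel {S : Set (D × D)} {x y : D} :
    (some x, some y) ∈ sinkRel S ↔ (x, y) ∈ S := by
  simp [sinkRel]

@[simp] lemma some_none_notMem_sinkRel (S : Set (D × D)) (x : D) : (some x, none) ∉ sinkRel S := by
  simp [sinkRel]

@[simp] lemma none_some_notMem_sinkRel (S : Set (D × D)) (y : D) : (none, some y) ∉ sinkRel S := by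
  simp [sinkRel]

lemma isSome_iff_of_mem_sinkRel {S : Set (D × D)} {a b : Option D} (h : (a, b) ∈ sinkRel S) :
    a.isSome ↔ b.isSome := by
  cases a <;> cases b <;> simp_all

lemma roleExt_sinkRel (rI : R → Set (D × D)) (ρ : DLRole R) :
    roleExt (fun r => sinkRel (rI r)) ρ = sinkRel (roleExt rI ρ) := by
  cases ρ with
  | name r => rfl
  | inv r =>
    ext ⟨a, b⟩
    cases a <;> cases b <;> simp [roleExt]

lemma ELC.ext_sink (cI : C → Set D) (rI : R → Set (D × D)) (Cn : ELC C R) :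
    ELC.ext (fun c => sinkSet (cI c)) (fun r => sinkRel (rI r)) Cn =
      sinkSet (ELC.ext cI rI Cn) := by
  induction Cn with
  | top => ext x; cases x <;> simp [ELC.ext]
  | name A => rfl
  | inter c d ihc ihd =>
    rw [ELC.ext, ELC.ext, ihc, ihd, sinkSet, sinkSet, sinkSet, ← Set.insert_inter_distrib,
      Set.image_inter (Option.some_injective D)]
  | ex ρ c ih =>
    ext x
    simp only [ELC.ext, ih, roleExt_sinkRel, Set.mem_ofPred_eq]
    cases x with
    | none => exact ⟨fun _ => none_mem_sinkSet _, fun _ => ⟨none, by simp⟩⟩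
    | some x =>
      constructor
      · rintro ⟨(_ | y), hxy, hy⟩
        · simp at hxy
        · exact some_mem_sinkSet.2 ⟨y, some_some_mem_sinkRel.1 hxy, some_mem_sinkSet.1 hy⟩
      · intro hx
        obtain ⟨y, hxy, hy⟩ := some_mem_sinkSet.1 hx
        exact ⟨some y, some_some_mem_sinkRel.2 hxy, some_mem_sinkSet.2 hy⟩

lemma GTBox.sem_sink {T : GTBox C R} {cI : C → Set D} {rI : R → Set (D × D)}
    (h : GTBox.sem T D cI rI) :
    GTBox.sem T (Option D) (fun c => sinkSet (cI c)) (fun r => sinkRel (rI r)) := by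
  intro p hp
  rw [ELC.ext_sink, ELC.ext_sink]
  exact Set.insert_subset_insert (Set.image_mono (h p hp))

lemma GTBox.consistentWith {I : Type} (T : GTBox C R) (A : ABox I C R) :
    ConsistentWith (GTBox.sem T) A :=
  ⟨Option Empty, ⟨fun _ => none, fun _ => sinkSet ∅, fun _ => sinkRel ∅⟩,
    GTBox.sem_sink (cI := fun _ => ∅) (rI := fun _ => ∅) fun _ _ x => x.elim,
    fun _ _ => none_mem_sinkSet _, fun _ _ => none_none_mem_sinkRel _⟩

end Sink

section Congr

variable {C R D V : Type}

lemma ELC.ext_congr {cI cI' : C → Set D} {rI rI' : R → Set (D × D)} (Cn : ELC C R)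
    (hc : ∀ c ∈ Cn.cnames, cI c = cI' c) (hr : ∀ r ∈ Cn.rnames, rI r = rI' r) :
    ELC.ext cI rI Cn = ELC.ext cI' rI' Cn := by
  induction Cn with
  | top => rfl
  | name A => exact hc A rfl
  | inter c d ihc ihd =>
    simp only [ELC.ext]
    rw [ihc (fun a ha => hc a (Or.inl ha)) (fun r hr' => hr r (Or.inl hr')),
      ihd (fun a ha => hc a (Or.inr ha)) (fun r hr' => hr r (Or.inr hr'))]
  | ex ρ c ih =>
    have hρ : roleExt rI ρ = roleExt rI' ρ := by
      have h := hr ρ.base (Set.mem_insert _ _)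
      cases ρ with
      | name r => exact h
      | inv r => simp only [roleExt, show rI r = rI' r from h]
    simp only [ELC.ext, hρ, ih hc (fun r hr' => hr r (Set.mem_insert_of_mem _ hr'))]

lemma GTBox.sem_congr {T : GTBox C R} {cI cI' : C → Set D} {rI rI' : R → Set (D × D)}
    (hc : ∀ c ∈ T.cnames, cI c = cI' c) (hr : ∀ r ∈ T.rnames, rI r = rI' r) :
    GTBox.sem T D cI rI ↔ GTBox.sem T D cI' rI' := by
  refine forall₂_congr fun p hp => ?_
  rw [ELC.ext_congr p.1 (fun c h => hc c ⟨p, hp, Or.inl h⟩) (fun r h => hr r ⟨p, hp, Or.inl h⟩),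
    ELC.ext_congr p.2 (fun c h => hc c ⟨p, hp, Or.inr h⟩) (fun r h => hr r ⟨p, hp, Or.inr h⟩)]

lemma CQ.match_congr {n : ℕ} {q : CQ V C R n} {cI cI' : C → Set D} {rI rI' : R → Set (D × D)}
    (hc : ∀ p ∈ q.conc, cI p.1 = cI' p.1) (hr : ∀ p ∈ q.role, rI p.1 = rI' p.1) (f : V → D) :
    q.Match cI rI f ↔ q.Match cI' rI' f := by
  refine and_congr (forall₂_congr fun p hp => ?_) (forall₂_congr fun p hp => ?_)
  · rw [hc p hp]
  · rw [hr p hp]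

end Congr

section SinkMatch

variable {C R D V : Type} {n : ℕ} {q : CQ V C R n} {cI : C → Set D} {rI : R → Set (D × D)}
  {f : V → Option D}

/-- Role atoms never join the sink to the rest of the interpretation. -/
lemma CQ.Connected.isSome_of_match_sink (hq : q.Connected)
    (hf : q.Match (fun c => sinkSet (cI c)) (fun r => sinkRel (rI r)) f)
    {x y : V} (hx : x ∈ q.vars) (hy : y ∈ q.vars) (hfx : (f x).isSome) : (f y).isSome := by
  have hxy := hq x hx y hy
  clear hy
  induction hxy with
  | refl => exact hfx
  | tail _ hadj ih =>
    obtain ⟨r, h | h⟩ := hadj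
    · exact (isSome_iff_of_mem_sinkRel (hf.2 _ h)).1 ih
    · exact (isSome_iff_of_mem_sinkRel (hf.2 _ h)).2 ih

lemma CQ.Match.of_sink (hf : q.Match (fun c => sinkSet (cI c)) (fun r => sinkRel (rI r)) f)
    (hsome : ∀ x ∈ q.vars, (f x).isSome) (d : D) :
    q.Match cI rI (fun x => (f x).getD d) := by
  constructor
  · rintro ⟨c, x⟩ hp
    obtain ⟨y, hy⟩ := Option.isSome_iff_exists.1 (hsome x (Or.inl (Or.inl ⟨c, hp⟩)))
    have := hf.1 _ hp
    simp_all
  · rintro ⟨r, x, y⟩ hp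
    obtain ⟨a, ha⟩ := Option.isSome_iff_exists.1 (hsome x (Or.inl (Or.inr ⟨r, y, Or.inl hp⟩)))
    obtain ⟨b, hb⟩ := Option.isSome_iff_exists.1 (hsome y (Or.inl (Or.inr ⟨r, x, Or.inr hp⟩)))
    have := hf.2 _ hp
    simp_all

end SinkMatch

def reductionTBox {C R : Type} (Tc : GTBox C R) (rr : R) (AA Astar : C) (Cq : ELC C R) :
    GTBox C R :=
  (ELC.ex (DLRole.name rr) (ELC.name AA), ELC.name AA) ::
    (ELC.inter (ELC.name AA) (ELC.name Astar), Cq) :: Tc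

section ReductionTBox

variable {I C R D V : Type} {Tc : GTBox C R} {rr : R} {AA Astar : C} {Cq : ELC C R}

lemma mem_of_rPath {cI : C → Set D} {rI : R → Set (D × D)}
    (h : ELC.ext cI rI (ELC.ex (DLRole.name rr) (ELC.name AA)) ⊆ cI AA)
    (d : ℕ → D) {k : ℕ} (hd : ∀ i < k, (d i, d (i + 1)) ∈ rI rr) (hk : d k ∈ cI AA) :
    d 0 ∈ cI AA :=
  Nat.decreasingInduction (motive := fun i _ => d i ∈ cI AA)
    (fun i hi ih => h ⟨d (i + 1), hd i hi, ih⟩) hk (Nat.zero_le k)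

lemma certAns_reductionTBox_of_rPath {q : CQ V C R 1}
    (hCq : ∀ (D : Type) (cI : C → Set D) (rI : R → Set (D × D)) (d : D),
      d ∈ ELC.ext cI rI Cq → ∃ f : V → D, q.Match cI rI f ∧ f (q.ans 0) = d)
    {W B : ABox I C R} {a₀ : I} (hW : CertConc (GTBox.sem Tc) W Astar a₀)
    (hWBc : W.conc ⊆ B.conc) (hWBr : W.role ⊆ B.role)
    (path : ℕ → I) (hpath0 : path 0 = a₀) (k : ℕ) (hA : (AA, path k) ∈ B.conc)
    (hr : ∀ i < k, (rr, path i, path (i + 1)) ∈ B.role) :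
    CertAns (GTBox.sem (reductionTBox Tc rr AA Astar Cq)) B q (fun _ => a₀) := by
  intro D M hM hMB
  have hMTc : GTBox.sem Tc D M.concI M.roleI := fun p hp =>
    hM p (List.mem_cons_of_mem _ (List.mem_cons_of_mem _ hp))
  have hMA : M.ind a₀ ∈ M.concI AA := hpath0 ▸
    mem_of_rPath (hM _ List.mem_cons_self) (fun i => M.ind (path i))
      (fun i hi => hMB.2 _ (hr i hi)) (hMB.1 _ hA)
  have hMAstar : M.ind a₀ ∈ M.concI Astar :=
    hW D M hMTc ⟨fun p hp => hMB.1 p (hWBc hp), fun p hp => hMB.2 p (hWBr hp)⟩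
  obtain ⟨f, hf, hf0⟩ := hCq D M.concI M.roleI _
    (hM _ (List.mem_cons_of_mem _ List.mem_cons_self) ⟨hMA, hMAstar⟩)
  exact ⟨f, hf, fun i => Subsingleton.elim i 0 ▸ hf0⟩

lemma GTBox.sem_reductionTBox_update [DecidableEq C] [DecidableEq R]
    (hTA : AA ∉ Tc.cnames) (hTr : rr ∉ Tc.rnames)
    {cI : C → Set D} {rI : R → Set (D × D)} (h : GTBox.sem Tc D cI rI) :
    GTBox.sem (reductionTBox Tc rr AA Astar Cq) D
      (Function.update cI AA ∅) (Function.update rI rr Set.univ) := by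
  intro p hp
  simp only [reductionTBox, List.mem_cons] at hp
  rcases hp with rfl | rfl | hp
  · rintro d ⟨e, -, he⟩
    simp [ELC.ext] at he
  · rintro d ⟨hd, -⟩
    simp [ELC.ext] at hd
  · refine (GTBox.sem_congr (fun c hc => ?_) (fun r hr => ?_)).1 h p hp
    · exact (Function.update_of_ne (ne_of_mem_of_not_mem hc hTA) _ _).symm
    · exact (Function.update_of_ne (ne_of_mem_of_not_mem hr hTr) _ _).symm

/-- The countermodel collapses `Y` into a sink and keeps a countermodel for `W`, with `A` empty
and `r` total, on the other individuals. -/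
lemma not_certAns_reductionTBox {q : CQ V C R 1} (hq : q.Connected)
    (hTA : AA ∉ Tc.cnames) (hTr : rr ∉ Tc.rnames)
    (hqA : ∀ x, (AA, x) ∉ q.conc) (hqr : ∀ x y, (rr, x, y) ∉ q.role)
    {W B : ABox I C R} {a₀ : I} (hWA : ∀ x, (AA, x) ∉ W.conc)
    (hW : ¬ CertAns (GTBox.sem Tc) W q (fun _ => a₀))
    (Y : Set I) (ha₀ : a₀ ∉ Y) (hBc : ∀ p ∈ B.conc, p.2 ∈ Y ∨ p ∈ W.conc)
    (hBr : ∀ p ∈ B.role,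
      (p.2.1 ∈ Y ∧ p.2.2 ∈ Y) ∨ (p.2.1 ∉ Y ∧ p.2.2 ∉ Y ∧ (p.1 = rr ∨ p ∈ W.role))) :
    ¬ CertAns (GTBox.sem (reductionTBox Tc rr AA Astar Cq)) B q (fun _ => a₀) := by
  classical
  intro hB
  apply hW
  intro D M₀ hM₀ hMW
  let cI := Function.update M₀.concI AA ∅
  let rI := Function.update M₀.roleI rr Set.univ
  let M : Interp (Option D) I C R :=
    ⟨fun a => if a ∈ Y then none else some (M₀.ind a),
      fun c => sinkSet (cI c), fun r => sinkRel (rI r)⟩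
  have hMB : M.ModelOf B := by
    constructor
    · rintro ⟨c, a⟩ hp
      by_cases ha : a ∈ Y
      · simp [M, ha]
      · have hpW := (hBc _ hp).resolve_left ha
        have hc : c ≠ AA := fun h => hWA a (h ▸ hpW)
        simpa [M, ha, cI, hc] using hMW.1 _ hpW
    · rintro ⟨r, a, b⟩ hp
      rcases hBr _ hp with ⟨ha, hb⟩ | ⟨ha, hb, hrW⟩
      · simp [M, ha, hb]
      · by_cases hr : r = rr
        · simp [M, ha, hb, rI, hr]
        · simpa [M, ha, hb, rI, hr] using hMW.2 _ (hrW.resolve_left hr)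
  obtain ⟨f, hf, hfa⟩ := hB _ M (GTBox.sem_sink (GTBox.sem_reductionTBox_update hTA hTr hM₀)) hMB
  have hans : f (q.ans 0) = some (M₀.ind a₀) := by simpa [M, ha₀] using hfa 0
  have hsome : ∀ x ∈ q.vars, (f x).isSome := fun x hx =>
    hq.isSome_of_match_sink hf (Or.inr ⟨0, rfl⟩) hx (by simp [hans])
  refine ⟨fun x => (f x).getD (M₀.ind a₀), ?_, fun i => by simp [Subsingleton.elim i 0, hans]⟩
  refine (CQ.match_congr (fun p hp => ?_) (fun p hp => ?_) _).1 (hf.of_sink hsome _)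
  · exact Function.update_of_ne (fun h => hqA p.2 (by rw [← h]; exact hp)) _ _
  · exact Function.update_of_ne (fun h => hqr p.2.1 p.2.2 (by rw [← h]; exact hp)) _ _

end ReductionTBox

section FirstOrder

variable {X C R D D₁ D₂ : Type} [DecidableEq X]

lemma FO.sat_congr (cI : C → Set D) (rI : R → Set (D × D)) (φ : FO X C R) {v w : X → D}
    (h : ∀ x ∈ φ.free, v x = w x) : FO.Sat cI rI φ v ↔ FO.Sat cI rI φ w := by
  induction φ generalizing v w with
  | eq x y => simp_all [FO.Sat, FO.free]
  | cn c x => simp_all [FO.Sat, FO.free]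
  | rl r x y => simp_all [FO.Sat, FO.free]
  | fal => rfl
  | imp φ ψ ihφ ihψ =>
    simp only [FO.free, Finset.mem_union] at h
    exact imp_congr (ihφ fun x hx => h x (Or.inl hx)) (ihψ fun x hx => h x (Or.inr hx))
  | all x ψ ih =>
    refine forall_congr' fun d => ih fun y hy => ?_
    by_cases hyx : y = x
    · simp [hyx]
    · simpa [hyx] using h y (Finset.mem_erase.2 ⟨hyx, hy⟩)

lemma FO.sat_foldr_all (cI : C → Set D) (rI : R → Set (D × D)) (l : List X) (φ : FO X C R)
    (v : X → D) :
    FO.Sat cI rI (l.foldr FO.all φ) v ↔ ∀ w : X → D, (∀ x ∉ l, w x = v x) → FO.Sat cI rI φ w := by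
  induction l generalizing v with
  | nil =>
    refine ⟨fun h w hw => ?_, fun h => h v fun _ _ => rfl⟩
    rwa [show w = v from funext fun x => hw x List.not_mem_nil]
  | cons x l ih =>
    simp only [List.foldr_cons, FO.Sat, ih, List.mem_cons, not_or]
    constructor
    · intro h w hw
      refine h (w x) w fun y hy => ?_
      by_cases hyx : y = x
      · simp [hyx]
      · simp [hyx, hw y ⟨hyx, hy⟩]
    · intro h d w hw
      exact h w fun y ⟨hyx, hy⟩ => by simpa [hyx] using hw y hy

noncomputable def FO.closeAbove (n : ℕ) (φ : FO ℕ C R) : FO ℕ C R :=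
  (φ.free.filter (n ≤ ·)).toList.foldr FO.all φ

lemma IsFORewriting.certAns_iff_sat_closeAbove {I V : Type} {n : ℕ} {T : TBoxSem C R}
    {s : Sig C R} {q : CQ V C R n} {φ : FO ℕ C R} (h : IsFORewriting (I := I) T s q φ)
    {A : ABox I C R} (hA : A.InSig s) (hT : ConsistentWith T A) (v : ℕ → I) :
    CertAns T A q (fun i => v i) ↔ FO.Sat A.concI A.roleI (φ.closeAbove n) v := by
  rw [h.2 A hA hT, FO.closeAbove, FO.sat_foldr_all]
  set L := (φ.free.filter (n ≤ ·)).toList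
  have hL : ∀ x, x ∈ L ↔ x ∈ φ.free ∧ n ≤ x := by simp [L]
  constructor
  · intro hφ w hw
    exact hφ w fun i => hw i fun hi => absurd ((hL i).1 hi).2 (not_le.2 i.2)
  · intro hφ w hw
    classical
    let w' : ℕ → I := fun x => if x ∈ L then w x else v x
    refine (FO.sat_congr _ _ φ fun x hx => ?_).1 (hφ w' fun x hx => if_neg hx)
    by_cases hnx : n ≤ x
    · simp [w', (hL x).2 ⟨hx, hnx⟩]
    · simp [w', hL, hnx, hw ⟨x, not_le.1 hnx⟩]

def IsPartialIso (cI₁ : C → Set D₁) (rI₁ : R → Set (D₁ × D₁)) (cI₂ : C → Set D₂)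
    (rI₂ : R → Set (D₂ × D₂)) (v : X → D₁) (w : X → D₂) : Prop :=
  (∀ x y, v x = v y ↔ w x = w y) ∧ (∀ c x, v x ∈ cI₁ c ↔ w x ∈ cI₂ c) ∧
    ∀ r x y, (v x, v y) ∈ rI₁ r ↔ (w x, w y) ∈ rI₂ r

theorem FO.sat_iff_of_backAndForth {cI₁ : C → Set D₁} {rI₁ : R → Set (D₁ × D₁)}
    {cI₂ : C → Set D₂} {rI₂ : R → Set (D₂ × D₂)} (G : ℕ → (X → D₁) → (X → D₂) → Prop)
    (hiso : ∀ m v w, G m v w → IsPartialIso cI₁ rI₁ cI₂ rI₂ v w)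
    (hforth : ∀ m v w, G (m + 1) v w →
      ∀ x d, ∃ e, G m (Function.update v x d) (Function.update w x e))
    (hback : ∀ m v w, G (m + 1) v w →
      ∀ x e, ∃ d, G m (Function.update v x d) (Function.update w x e))
    (φ : FO X C R) {m : ℕ} {v : X → D₁} {w : X → D₂} (hφ : φ.qr ≤ m) (hvw : G m v w) :
    FO.Sat cI₁ rI₁ φ v ↔ FO.Sat cI₂ rI₂ φ w := by
  induction φ generalizing m v w with
  | eq x y => exact (hiso m v w hvw).1 x y
  | cn c x => exact (hiso m v w hvw).2.1 c x
  | rl r x y => exact (hiso m v w hvw).2.2 r x y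
  | fal => rfl
  | imp φ ψ ihφ ihψ =>
    exact imp_congr (ihφ (le_of_max_le_left hφ) hvw) (ihψ (le_of_max_le_right hφ) hvw)
  | all x ψ ih =>
    obtain ⟨m, rfl⟩ : ∃ m', m = m' + 1 := ⟨m - 1, by simp only [FO.qr] at hφ; omega⟩
    have hψ : ψ.qr ≤ m := by simp only [FO.qr] at hφ; omega
    constructor
    · intro h e
      obtain ⟨d, hd⟩ := hback m v w hvw x e
      exact (ih hψ hd).1 (h d)
    · intro h d
      obtain ⟨e, he⟩ := hforth m v w hvw x d
      exact (ih hψ he).2 (h e)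

end FirstOrder

section SwapGame

variable {I X C R : Type} (N : ℕ) (ht : I → ℕ) (fl : I → I)

def SwapPebble (r : ℕ) (d e : I) : Prop :=
  (d = e ∧ ht e + r < N) ∨ (d = fl e ∧ r < ht e)

def SwapSeparated (r : ℕ) (d e d' e' : I) : Prop :=
  d = e → d' ≠ e' → ht e + r < ht e' ∨ ht e' + r < ht e

def SwapSim (r : ℕ) (v w : X → I) : Prop :=
  (∀ k, SwapPebble N ht fl r (v k) (w k)) ∧ ∀ k l, SwapSeparated ht r (v k) (w k) (v l) (w l)

structure IsSwapPair (cI₁ : C → Set I) (rI₁ : R → Set (I × I)) (cI₂ : C → Set I)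
    (rI₂ : R → Set (I × I)) : Prop where
  flip_involutive : Function.Involutive fl
  height_flip : ∀ e, ht (fl e) = ht e
  flip_ne : ∀ e, 0 < ht e → fl e ≠ e
  conc_low : ∀ c e, ht e < N → (e ∈ cI₁ c ↔ e ∈ cI₂ c)
  conc_high : ∀ c e, 0 < ht e → (fl e ∈ cI₁ c ↔ e ∈ cI₂ c)
  role_low : ∀ r a b, ht a < N → ht b < N → ((a, b) ∈ rI₁ r ↔ (a, b) ∈ rI₂ r)
  role_high : ∀ r a b, 0 < ht a → 0 < ht b → ((fl a, fl b) ∈ rI₁ r ↔ (a, b) ∈ rI₂ r)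
  height_role₁ : ∀ r a b, (a, b) ∈ rI₁ r → ht a ≤ ht b + 1 ∧ ht b ≤ ht a + 1
  height_role₂ : ∀ r a b, (a, b) ∈ rI₂ r → ht a ≤ ht b + 1 ∧ ht b ≤ ht a + 1

variable {N ht fl} {r : ℕ} {v w : X → I}

lemma SwapSim.of_low (h : ∀ k, ht (v k) + r < N) : SwapSim N ht fl r v v :=
  ⟨fun k => Or.inl ⟨rfl, h k⟩, fun _ _ _ hne => absurd rfl hne⟩

lemma SwapSim.mono {r' : ℕ} (hr : r ≤ r') (h : SwapSim N ht fl r' v w) : SwapSim N ht fl r v w := by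
  refine ⟨fun k => ?_, fun k l hk hl => ?_⟩
  · rcases h.1 k with ⟨h1, h2⟩ | ⟨h1, h2⟩
    · exact Or.inl ⟨h1, by omega⟩
    · exact Or.inr ⟨h1, by omega⟩
  · have := h.2 k l hk hl
    omega

lemma SwapSim.symm (hfl : Function.Involutive fl) (hht : ∀ e, ht (fl e) = ht e)
    (h : SwapSim N ht fl r v w) : SwapSim N ht fl r w v := by
  have hv : ∀ k, ht (v k) = ht (w k) := fun k => by
    rcases h.1 k with ⟨h1, -⟩ | ⟨h1, -⟩ <;> simp [h1, hht]
  refine ⟨fun k => ?_, fun k l hk hl => ?_⟩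
  · rcases h.1 k with ⟨h1, h2⟩ | ⟨h1, h2⟩
    · exact Or.inl ⟨h1.symm, by rw [hv k]; exact h2⟩
    · exact Or.inr ⟨by rw [h1, hfl], by rw [hv k]; exact h2⟩
  · rw [hv, hv]
    exact h.2 k l hk.symm (Ne.symm hl)

lemma SwapSim.update [DecidableEq X] (h : SwapSim N ht fl r v w) {x : X} {d e : I}
    (hde : SwapPebble N ht fl r d e)
    (hsep : ∀ k ≠ x,
      SwapSeparated ht r (v k) (w k) d e ∧ SwapSeparated ht r d e (v k) (w k)) :
    SwapSim N ht fl r (Function.update v x d) (Function.update w x e) := by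
  refine ⟨fun k => ?_, fun k l => ?_⟩
  · by_cases hk : k = x
    · simpa [hk] using hde
    · simpa [hk] using h.1 k
  · by_cases hk : k = x <;> by_cases hl : l = x
    · simp only [hk, hl, Function.update_self]
      exact fun hde hne => absurd hde hne
    · simpa [hk, hl] using (hsep l hl).2
    · simpa [hk, hl] using (hsep k hk).1
    · simpa [hk, hl] using h.2 k l

/-- Duplicator's answer to a pebble on `e`: flip it if it is close to the top or to a flipped
pebble, keep it otherwise. Halving the radius absorbs the distance to the new pebble. -/
lemma SwapSim.exists_update [DecidableEq X] (hfix : ∀ e, 0 < ht e → fl e ≠ e) (hN : 2 * r < N)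
    (h : SwapSim N ht fl (2 * r) v w) (x : X) (e : I) :
    ∃ d, SwapSim N ht fl r (Function.update v x d) (Function.update w x e) := by
  have h' := h.mono (by omega : r ≤ 2 * r)
  by_cases hswap : N ≤ ht e + r ∨ ∃ l, v l ≠ w l ∧ ht (w l) ≤ ht e + r ∧ ht e ≤ ht (w l) + r
  · have hr : r < ht e := by
      rcases hswap with htop | ⟨l, hl, hle, -⟩
      · omega
      · rcases h.1 l with ⟨hl', -⟩ | ⟨-, hl'⟩
        · exact absurd hl' hl
        · omega
    refine ⟨fl e, h'.update (Or.inr ⟨rfl, hr⟩) fun k _ =>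
      ⟨fun hk _ => ?_, fun hde => absurd hde (hfix e (by omega))⟩⟩
    rcases h.1 k with ⟨-, hlow⟩ | ⟨hk', hhigh⟩
    · rcases hswap with htop | ⟨l, hl, hle, hge⟩
      · omega
      · have := h.2 k l hk hl
        omega
    · exact absurd (hk'.symm.trans hk) (hfix _ (by omega))
  · push Not at hswap
    obtain ⟨htop, hfar⟩ := hswap
    refine ⟨e, h'.update (Or.inl ⟨rfl, htop⟩) fun k _ =>
      ⟨fun _ hne => absurd rfl hne, fun _ hk => ?_⟩⟩
    have := hfar k hk
    omega

variable {cI₁ cI₂ : C → Set I} {rI₁ rI₂ : R → Set (I × I)}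

lemma SwapSim.pair_cases (hP : IsSwapPair N ht fl cI₁ rI₁ cI₂ rI₂) (h : SwapSim N ht fl r v w)
    (k l : X) :
    (v k = w k ∧ v l = w l ∧ ht (w k) < N ∧ ht (w l) < N) ∨
    (v k = fl (w k) ∧ v l = fl (w l) ∧ 0 < ht (w k) ∧ 0 < ht (w l)) ∨
    ((ht (w k) + r < ht (w l) ∨ ht (w l) + r < ht (w k)) ∧
      ht (v k) = ht (w k) ∧ ht (v l) = ht (w l)) := by
  rcases h.1 k with ⟨hk, hk'⟩ | ⟨hk, hk'⟩ <;> rcases h.1 l with ⟨hl, hl'⟩ | ⟨hl, hl'⟩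
  · exact Or.inl ⟨hk, hl, by omega, by omega⟩
  · have hne : v l ≠ w l := hl ▸ hP.flip_ne _ (by omega)
    exact Or.inr (Or.inr ⟨h.2 k l hk hne, by rw [hk], by rw [hl, hP.height_flip]⟩)
  · have hne : v k ≠ w k := hk ▸ hP.flip_ne _ (by omega)
    exact Or.inr (Or.inr ⟨(h.2 l k hl hne).symm, by rw [hk, hP.height_flip], by rw [hl]⟩)
  · exact Or.inr (Or.inl ⟨hk, hl, by omega, by omega⟩)

lemma SwapSim.isPartialIso (hP : IsSwapPair N ht fl cI₁ rI₁ cI₂ rI₂) (hr : 0 < r)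
    (h : SwapSim N ht fl r v w) : IsPartialIso cI₁ rI₁ cI₂ rI₂ v w := by
  refine ⟨fun x y => ?_, fun c x => ?_, fun ρ x y => ?_⟩
  · rcases h.pair_cases hP x y with ⟨hx, hy, -⟩ | ⟨hx, hy, -⟩ | ⟨hfar, hx, hy⟩
    · rw [hx, hy]
    · rw [hx, hy, hP.flip_involutive.injective.eq_iff]
    · exact iff_of_false (fun hxy => by have := congrArg ht hxy; omega)
        (fun hxy => by have := congrArg ht hxy; omega)
  · rcases h.1 x with ⟨hx, hlow⟩ | ⟨hx, hhigh⟩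
    · rw [hx]
      exact hP.conc_low c _ (by omega)
    · rw [hx]
      exact hP.conc_high c _ (by omega)
  · rcases h.pair_cases hP x y with ⟨hx, hy, hx', hy'⟩ | ⟨hx, hy, hx', hy'⟩ | ⟨hfar, hx, hy⟩
    · rw [hx, hy]
      exact hP.role_low ρ _ _ hx' hy'
    · rw [hx, hy]
      exact hP.role_high ρ _ _ hx' hy'
    · exact iff_of_false (fun hxy => by have := hP.height_role₁ _ _ _ hxy; omega)
        (fun hxy => by have := hP.height_role₂ _ _ _ hxy; omega)

theorem IsSwapPair.sat_iff [DecidableEq X] (hP : IsSwapPair N ht fl cI₁ rI₁ cI₂ rI₂) (φ : FO X C R)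
    (hN : 2 ^ φ.qr < N) (h : SwapSim N ht fl (2 ^ φ.qr) v w) :
    FO.Sat cI₁ rI₁ φ v ↔ FO.Sat cI₂ rI₂ φ w := by
  refine FO.sat_iff_of_backAndForth (fun m v w => 2 ^ m < N ∧ SwapSim N ht fl (2 ^ m) v w)
    (fun m v w h => h.2.isPartialIso hP (by positivity)) (fun m v w ⟨hN, h⟩ x d => ?_)
    (fun m v w ⟨hN, h⟩ x e => ?_) φ le_rfl ⟨hN, h⟩
  all_goals rw [pow_succ'] at hN h
  · obtain ⟨e, he⟩ := (h.symm hP.flip_involutive hP.height_flip).exists_update hP.flip_ne hN x d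
    exact ⟨e, by omega, he.symm hP.flip_involutive hP.height_flip⟩
  · obtain ⟨d, hd⟩ := h.exists_update hP.flip_ne hN x e
    exact ⟨d, by omega, hd⟩

end SwapGame

section Chains

variable {I C R : Type} (N : ℕ) (chain : Bool × ℕ → I)

open Classical in
noncomputable def chainHeight (e : I) : ℕ :=
  if e ∈ chain '' {p | p.2 ≤ N} then (Function.invFunOn chain {p | p.2 ≤ N} e).2 else 0

open Classical in
noncomputable def chainFlip (e : I) : I :=
  if e ∈ chain '' {p | p.2 ≤ N} then
    chain (!(Function.invFunOn chain {p | p.2 ≤ N} e).1,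
      (Function.invFunOn chain {p | p.2 ≤ N} e).2)
  else e

variable {N chain}

lemma chainHeight_apply (hinj : Set.InjOn chain {p | p.2 ≤ N}) {p : Bool × ℕ} (hp : p.2 ≤ N) :
    chainHeight N chain (chain p) = p.2 := by
  rw [chainHeight, if_pos ⟨p, hp, rfl⟩, hinj.leftInvOn_invFunOn hp]

lemma chainFlip_apply (hinj : Set.InjOn chain {p | p.2 ≤ N}) {p : Bool × ℕ} (hp : p.2 ≤ N) :
    chainFlip N chain (chain p) = chain (!p.1, p.2) := by
  rw [chainFlip, if_pos ⟨p, hp, rfl⟩, hinj.leftInvOn_invFunOn hp]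

lemma chainHeight_of_notMem {e : I} (he : e ∉ chain '' {p | p.2 ≤ N}) :
    chainHeight N chain e = 0 :=
  if_neg he

lemma chainFlip_of_notMem {e : I} (he : e ∉ chain '' {p | p.2 ≤ N}) : chainFlip N chain e = e :=
  if_neg he

lemma exists_eq_chain_of_chainHeight_pos (hinj : Set.InjOn chain {p | p.2 ≤ N}) {e : I}
    (he : 0 < chainHeight N chain e) : ∃ t i, 0 < i ∧ i ≤ N ∧ chain (t, i) = e := by
  by_cases hmem : e ∈ chain '' {p | p.2 ≤ N}
  · obtain ⟨⟨t, i⟩, hi, rfl⟩ := hmem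
    rw [chainHeight_apply hinj hi] at he
    exact ⟨t, i, he, hi, rfl⟩
  · rw [chainHeight_of_notMem hmem] at he
    exact absurd he (lt_irrefl 0)

lemma chainFlip_involutive (hinj : Set.InjOn chain {p | p.2 ≤ N}) :
    Function.Involutive (chainFlip N chain) := by
  intro e
  by_cases hmem : e ∈ chain '' {p | p.2 ≤ N}
  · obtain ⟨p, hp, rfl⟩ := hmem
    rw [chainFlip_apply hinj hp, chainFlip_apply hinj (p := (!p.1, p.2)) hp, Bool.not_not]
  · rw [chainFlip_of_notMem hmem, chainFlip_of_notMem hmem]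

lemma chainHeight_chainFlip (hinj : Set.InjOn chain {p | p.2 ≤ N}) (e : I) :
    chainHeight N chain (chainFlip N chain e) = chainHeight N chain e := by
  by_cases hmem : e ∈ chain '' {p | p.2 ≤ N}
  · obtain ⟨p, hp, rfl⟩ := hmem
    rw [chainFlip_apply hinj hp, chainHeight_apply hinj hp,
      chainHeight_apply hinj (p := (!p.1, p.2)) hp]
  · rw [chainFlip_of_notMem hmem]

lemma chainFlip_ne (hinj : Set.InjOn chain {p | p.2 ≤ N}) {e : I}
    (he : 0 < chainHeight N chain e) : chainFlip N chain e ≠ e := by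
  obtain ⟨t, i, -, hi, rfl⟩ := exists_eq_chain_of_chainHeight_pos hinj he
  rw [chainFlip_apply hinj hi]
  intro h
  simpa using hinj hi hi h

lemma chain_succ_iff (hinj : Set.InjOn chain {p | p.2 ≤ N}) {t t' : Bool} {i i' : ℕ}
    (hi : i ≤ N) (hi' : i' ≤ N) :
    (∃ u, ∃ j < N, chain (t, i) = chain (u, j) ∧ chain (t', i') = chain (u, j + 1)) ↔
      t' = t ∧ i' = i + 1 := by
  constructor
  · rintro ⟨u, j, hj, h, h'⟩
    have e := hinj hi (show j ≤ N by omega) h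
    have e' := hinj hi' (show j + 1 ≤ N by omega) h'
    simp only [Prod.mk.injEq] at e e'
    obtain ⟨rfl, rfl⟩ := e
    exact e'
  · rintro ⟨rfl, rfl⟩
    exact ⟨_, i, by omega, rfl, rfl⟩

def twoChains (W : ABox I C R) (AA : C) (rr : R) (N : ℕ) (chain : Bool × ℕ → I) (s : Bool) :
    ABox I C R where
  conc := W.conc ∪ {(AA, chain (s, N))}
  role := W.role ∪ {p | ∃ t i, i < N ∧ p = (rr, chain (t, i), chain (t, i + 1))}

variable {W : ABox I C R} {AA : C} {rr : R}

lemma mem_twoChains_concI {s : Bool} {c : C} {e : I} :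
    e ∈ (twoChains W AA rr N chain s).concI c ↔ (c, e) ∈ W.conc ∨ (c = AA ∧ e = chain (s, N)) := by
  simp only [twoChains, ABox.concI, Set.mem_ofPred_eq, Set.mem_union, Set.mem_singleton_iff,
    Prod.mk.injEq]

lemma mem_twoChains_roleI {s : Bool} {ρ : R} {a b : I} :
    (a, b) ∈ (twoChains W AA rr N chain s).roleI ρ ↔ (ρ, a, b) ∈ W.role ∨
      (ρ = rr ∧ ∃ t, ∃ i < N, a = chain (t, i) ∧ b = chain (t, i + 1)) := by
  simp only [twoChains, ABox.roleI, Set.mem_ofPred_eq, Set.mem_union, Prod.mk.injEq]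
  refine or_congr Iff.rfl ⟨?_, ?_⟩
  · rintro ⟨t, i, hi, rfl, rfl, rfl⟩
    exact ⟨rfl, t, i, hi, rfl, rfl⟩
  · rintro ⟨rfl, t, i, hi, rfl, rfl⟩
    exact ⟨t, i, hi, rfl, rfl, rfl⟩

lemma twoChains_inSig {s : Sig C R} (hW : W.InSig s) (hA : AA ∈ s.concs) (hr : rr ∈ s.roles)
    (b : Bool) : (twoChains W AA rr N chain b).InSig s := by
  constructor
  · rintro p (hp | rfl)
    exacts [hW.1 p hp, hA]
  · rintro p (hp | ⟨t, i, -, rfl⟩)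
    exacts [hW.2 p hp, hr]

end Chains

section TwoChains

variable {I C R V : Type} {N : ℕ} {chain : Bool × ℕ → I} {W : ABox I C R} {AA : C} {rr : R}

lemma chainHeight_eq_zero_of_mem_ind (hinj : Set.InjOn chain {p | p.2 ≤ N})
    (hfresh : ∀ t i, i ≤ N → (t, i) ≠ (false, 0) → chain (t, i) ∉ W.Ind) {e : I}
    (he : e ∈ W.Ind) : chainHeight N chain e = 0 := by
  by_contra h
  obtain ⟨t, i, hi0, hi, rfl⟩ := exists_eq_chain_of_chainHeight_pos hinj (Nat.pos_of_ne_zero h)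
  exact hfresh t i hi (by simp only [ne_eq, Prod.mk.injEq]; omega) he

lemma chainHeight_le_of_mem_twoChains_roleI (hinj : Set.InjOn chain {p | p.2 ≤ N})
    (hfresh : ∀ t i, i ≤ N → (t, i) ≠ (false, 0) → chain (t, i) ∉ W.Ind) {s : Bool} {ρ : R}
    {a b : I} (h : (a, b) ∈ (twoChains W AA rr N chain s).roleI ρ) :
    chainHeight N chain a ≤ chainHeight N chain b + 1 ∧
      chainHeight N chain b ≤ chainHeight N chain a + 1 := by
  rcases mem_twoChains_roleI.1 h with hW | ⟨-, t, i, hi, rfl, rfl⟩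
  · rw [chainHeight_eq_zero_of_mem_ind hinj hfresh (Or.inr ⟨ρ, b, Or.inl hW⟩),
      chainHeight_eq_zero_of_mem_ind hinj hfresh (Or.inr ⟨ρ, a, Or.inr hW⟩)]
    omega
  · rw [chainHeight_apply hinj (p := (t, i)) hi.le, chainHeight_apply hinj (p := (t, i + 1)) hi]
    omega

/-- Moving `A` from the end of one chain to the end of the other is invisible to the swap game:
below height `N` nothing changed, and above height `0` the chains are exchanged. -/
theorem isSwapPair_twoChains (hinj : Set.InjOn chain {p | p.2 ≤ N})
    (hfresh : ∀ t i, i ≤ N → (t, i) ≠ (false, 0) → chain (t, i) ∉ W.Ind) :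
    IsSwapPair N (chainHeight N chain) (chainFlip N chain)
      (twoChains W AA rr N chain false).concI (twoChains W AA rr N chain false).roleI
      (twoChains W AA rr N chain true).concI (twoChains W AA rr N chain true).roleI := by
  have hpos : ∀ {t i}, 0 < i → (t, i) ≠ (false, 0) := fun hi h => by simp_all
  refine ⟨chainFlip_involutive hinj, chainHeight_chainFlip hinj, fun e => chainFlip_ne hinj,
    fun c e he => ?_, fun c e he => ?_, fun _ _ _ _ _ => Iff.rfl, fun ρ a b ha hb => ?_,
    fun _ _ _ => chainHeight_le_of_mem_twoChains_roleI hinj hfresh,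
    fun _ _ _ => chainHeight_le_of_mem_twoChains_roleI hinj hfresh⟩
  · have hN : ∀ s, e ≠ chain (s, N) := fun s h => by
      rw [h, chainHeight_apply hinj (p := (s, N)) le_rfl] at he
      exact lt_irrefl N he
    simp only [mem_twoChains_concI, hN, and_false, or_false]
  · obtain ⟨t, i, hi0, hi, rfl⟩ := exists_eq_chain_of_chainHeight_pos hinj he
    have hN : ∀ u s, chain (u, i) = chain (s, N) ↔ u = s ∧ i = N := fun u s =>
      (hinj.eq_iff hi (show (s, N) ∈ {p : Bool × ℕ | p.2 ≤ N} from le_refl N)).trans Prod.mk_inj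
    have hW : ∀ u, (c, chain (u, i)) ∉ W.conc := fun u h => hfresh u i hi (hpos hi0) (Or.inl ⟨c, h⟩)
    rw [chainFlip_apply hinj (p := (t, i)) hi, mem_twoChains_concI, mem_twoChains_concI]
    simp [hW, hN]
  · obtain ⟨t, i, hi0, hi, rfl⟩ := exists_eq_chain_of_chainHeight_pos hinj ha
    obtain ⟨t', i', hi0', hi', rfl⟩ := exists_eq_chain_of_chainHeight_pos hinj hb
    have hW : ∀ u e, (ρ, chain (u, i), e) ∉ W.role := fun u e h =>
      hfresh u i hi (hpos hi0) (Or.inr ⟨ρ, e, Or.inl h⟩)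
    rw [chainFlip_apply hinj (p := (t, i)) hi, chainFlip_apply hinj (p := (t', i')) hi',
      mem_twoChains_roleI, mem_twoChains_roleI, chain_succ_iff hinj hi hi',
      chain_succ_iff hinj hi hi']
    simp [hW]

lemma not_certAns_twoChains_true {Tc : GTBox C R} {Astar : C} {Cq : ELC C R}
    {q : CQ V C R 1} (hq : q.Connected) (hTA : AA ∉ Tc.cnames) (hTr : rr ∉ Tc.rnames)
    (hqA : ∀ x, (AA, x) ∉ q.conc) (hqr : ∀ x y, (rr, x, y) ∉ q.role)
    (hinj : Set.InjOn chain {p | p.2 ≤ N}) (hWA : ∀ x, (AA, x) ∉ W.conc)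
    (hfresh : ∀ t i, i ≤ N → (t, i) ≠ (false, 0) → chain (t, i) ∉ W.Ind)
    (hW : ¬ CertAns (GTBox.sem Tc) W q (fun _ => chain (false, 0))) :
    ¬ CertAns (GTBox.sem (reductionTBox Tc rr AA Astar Cq)) (twoChains W AA rr N chain true) q
      (fun _ => chain (false, 0)) := by
  have hY : ∀ {t i}, i ≤ N → (chain (t, i) ∈ chain '' {p | p.1 = true ∧ p.2 ≤ N} ↔ t = true) :=
    fun {t i} hi => ⟨fun ⟨⟨u, j⟩, ⟨hu, hj⟩, h⟩ => by
      have := hinj (show (u, j) ∈ {p : Bool × ℕ | p.2 ≤ N} from hj) hi h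
      simp only [Prod.mk.injEq] at this
      rw [← this.1]
      exact hu, fun ht => ⟨(t, i), ⟨ht, hi⟩, rfl⟩⟩
  have hWY : ∀ e ∈ W.Ind, e ∉ chain '' {p | p.1 = true ∧ p.2 ≤ N} := by
    rintro e he ⟨p, hp, rfl⟩
    exact hfresh p.1 p.2 hp.2 (by simp [hp.1]) he
  refine not_certAns_reductionTBox hq hTA hTr hqA hqr hWA hW _
    (fun h => Bool.false_ne_true ((hY (t := false) (Nat.zero_le N)).1 h))
    (fun p hp => ?_) (fun p hp => ?_)
  · rcases hp with hp | rfl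
    exacts [Or.inr hp, Or.inl ((hY le_rfl).2 rfl)]
  · rcases hp with hp | ⟨t, i, hi, rfl⟩
    · exact Or.inr ⟨hWY _ (Or.inr ⟨_, _, Or.inl hp⟩), hWY _ (Or.inr ⟨_, _, Or.inr hp⟩), Or.inr hp⟩
    · cases t
      · exact Or.inr ⟨by simp [hY hi.le], by simp [hY (Nat.succ_le_of_lt hi)], Or.inl rfl⟩
      · exact Or.inl ⟨(hY hi.le).2 rfl, (hY (Nat.succ_le_of_lt hi)).2 rfl⟩

end TwoChains

def pathChain {I : Type} (path : ℕ → I) (N : ℕ) : Bool × ℕ → I :=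
  fun p => path (bif p.1 then N + 1 + p.2 else p.2)

lemma pathChain_injOn {I : Type} {path : ℕ → I} (h : Function.Injective path) (N : ℕ) :
    Set.InjOn (pathChain path N) {p | p.2 ≤ N} := by
  rintro ⟨t, i⟩ hi ⟨t', i'⟩ hi' hp
  have := h hp
  simp only [Set.mem_ofPred_eq] at hi hi'
  cases t <;> cases t' <;> simp_all <;> omega

theorem not_foRewritable_reductionTBox {I C R V : Type} {Tc : GTBox C R} {s : Sig C R}
    {q : CQ V C R 1} {Astar AA : C} {rr : R} {Cq : ELC C R} (hq : q.Connected)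
    (hTA : AA ∉ Tc.cnames) (hTr : rr ∉ Tc.rnames)
    (hqA : ∀ x, (AA, x) ∉ q.conc) (hqr : ∀ x y, (rr, x, y) ∉ q.role)
    (hCq : ∀ (D : Type) (cI : C → Set D) (rI : R → Set (D × D)) (d : D),
      d ∈ ELC.ext cI rI Cq → ∃ f : V → D, q.Match cI rI f ∧ f (q.ans 0) = d)
    (hAs : AA ∈ s.concs) (hrs : rr ∈ s.roles) {W : ABox I C R} (hWs : W.InSig s)
    (hWA : ∀ x, (AA, x) ∉ W.conc) {path : ℕ → I}
    (hWpos : CertConc (GTBox.sem Tc) W Astar (path 0))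
    (hWneg : ¬ CertAns (GTBox.sem Tc) W q (fun _ => path 0))
    (hpathinj : Function.Injective path) (hpathfresh : ∀ i : ℕ, i ≠ 0 → path i ∉ W.Ind) :
    ¬ FORewritable I (GTBox.sem (reductionTBox Tc rr AA Astar Cq)) s q := by
  rintro ⟨φ, hφ⟩
  set N := 2 ^ (φ.closeAbove 1).qr + 1
  have hinj := pathChain_injOn hpathinj N
  have hfresh : ∀ t i, i ≤ N → (t, i) ≠ (false, 0) → pathChain path N (t, i) ∉ W.Ind := by
    intro t i _ hi
    cases t
    · exact hpathfresh i (by simpa using hi)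
    · exact hpathfresh (N + 1 + i) (by omega)
  have hsig (b : Bool) := twoChains_inSig (N := N) (chain := pathChain path N) hWs hAs hrs b
  have hpos := certAns_reductionTBox_of_rPath (B := twoChains W AA rr N (pathChain path N) false)
    hCq hWpos Set.subset_union_left Set.subset_union_left (fun i => pathChain path N (false, i))
    rfl N (Or.inr rfl) fun i hi => Or.inr ⟨false, i, hi, rfl⟩
  have hneg := not_certAns_twoChains_true (Astar := Astar) (Cq := Cq) hq hTA hTr hqA hqr
    hinj hWA hfresh hWneg
  have hsat := (hφ.certAns_iff_sat_closeAbove (hsig false) (GTBox.consistentWith _ _)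
    (fun _ => pathChain path N (false, 0))).1 hpos
  refine hneg ((hφ.certAns_iff_sat_closeAbove (hsig true) (GTBox.consistentWith _ _) _).2
    (((isSwapPair_twoChains hinj hfresh).sat_iff _ (by omega) (SwapSim.of_low fun _ => ?_)).1 hsat))
  rw [chainHeight_apply hinj (p := (false, 0)) (Nat.zero_le N)]
  omega

theorem reduction_to_non_fo_rewritability_general {I C R V : Type}
    (Tc : GTBox C R) (sc : Sig C R) (q : CQ V C R 1)
    (hconn : q.Connected)
    (Astar AA : C) (rr : R)
    (hAA₁ : AA ∉ sc.concs) (hAA₂ : AA ∉ GTBox.cnames Tc) (hAA₃ : ∀ x, (AA, x) ∉ q.conc)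
    (hrr₂ : rr ∉ GTBox.rnames Tc) (hrr₃ : ∀ x y, (rr, x, y) ∉ q.role)
    (Cq : ELC C R)
    (hCq : ∀ (D : Type) (cI : C → Set D) (rI : R → Set (D × D)) (d : D),
      d ∈ ELC.ext cI rI Cq → ∃ f : V → D, q.Match cI rI f ∧ f (q.ans 0) = d)
    (T : GTBox C R)
    (hT : T = (ELC.ex (DLRole.name rr) (ELC.name AA), ELC.name AA) ::
              (ELC.inter (ELC.name AA) (ELC.name Astar), Cq) :: Tc)
    (s : Sig C R)
    (hs : s.concs = insert AA sc.concs ∧ s.roles = insert rr sc.roles)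
    (Wt : PseudoTree I C R) (a₀ : I)
    (hWsig : Wt.toABox.InSig sc)
    (hWpos : CertConc (GTBox.sem Tc) Wt.toABox Astar a₀)
    (hWneg : ¬ CertAns (GTBox.sem Tc) Wt.toABox q (fun _ => a₀))
    (path : ℕ → I) (hpath0 : path 0 = a₀) (hpathinj : Function.Injective path)
    (hpathfresh : ∀ i : ℕ, i ≠ 0 → path i ∉ Wt.toABox.Ind) :
    (¬ FORewritable I (GTBox.sem T) s q) ∧
    ∀ k : ℕ, 1 ≤ k →
      CertAns (GTBox.sem T)
        (⟨Wt.conc ∪ {(AA, path k)},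
          Wt.role ∪ {p | ∃ i < k, p = (rr, path i, path (i + 1))}⟩ : ABox I C R)
        q (fun _ => a₀) ∧
      ¬ CertAns (GTBox.sem T)
        (⟨Wt.conc,
          Wt.role ∪ {p | ∃ i, i + 1 < k ∧ p = (rr, path i, path (i + 1))}⟩ : ABox I C R)
        q (fun _ => a₀) := by
  subst hT hpath0
  have hWA : ∀ x, (AA, x) ∉ Wt.conc := fun x h => hAA₁ (hWsig.1 _ h)
  have hWs : Wt.InSig s := ⟨fun p hp => hs.1 ▸ Set.mem_insert_of_mem _ (hWsig.1 p hp),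
    fun p hp => hs.2 ▸ Set.mem_insert_of_mem _ (hWsig.2 p hp)⟩
  refine ⟨not_foRewritable_reductionTBox hconn hAA₂ hrr₂ hAA₃ hrr₃ hCq
    (hs.1 ▸ Set.mem_insert _ _) (hs.2 ▸ Set.mem_insert _ _) hWs hWA hWpos hWneg hpathinj hpathfresh,
    fun k _ => ⟨?_, ?_⟩⟩
  · exact certAns_reductionTBox_of_rPath hCq hWpos Set.subset_union_left Set.subset_union_left
      path rfl k (Or.inr rfl) fun i hi => Or.inr ⟨i, hi, rfl⟩
  · refine not_certAns_reductionTBox hconn hAA₂ hrr₂ hAA₃ hrr₃ hWA hWneg ∅ (Set.notMem_empty _)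
      (fun p hp => Or.inr hp) fun p hp => Or.inr ⟨Set.notMem_empty _, Set.notMem_empty _, ?_⟩
    rcases hp with hp | ⟨i, -, rfl⟩
    exacts [Or.inr hp, Or.inl rfl]

/-- the reduction scheme that turns a positive instance (witnessed by a
tree-shaped ABox `W` with root `a₀` such that `T_c, W ⊨ A*(a₀)` and `T_c, W ⊭ q(a₀)`)
into non-FO-rewritability of `(T_c ∪ {∃r.A ⊑ A, A ⊓ A* ⊑ C_q}, Σ_c ∪ {A, r}, q)`,
witnessed by the family of ABoxes obtained by attaching an `r`-path ending in `A` to `a₀`. -/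
theorem reduction_to_non_fo_rewritability {I C R V : Type} [Infinite I]
    (Tc : GTBox C R) (sc : Sig C R) (q : CQ V C R 1)
    (hconn : q.Connected)
    (Astar AA : C) (rr : R) (hne : AA ≠ Astar)
    (hAstar : Astar ∉ sc.concs)
    (hAA₁ : AA ∉ sc.concs) (hAA₂ : AA ∉ GTBox.cnames Tc) (hAA₃ : ∀ x, (AA, x) ∉ q.conc)
    (hrr₁ : rr ∉ sc.roles) (hrr₂ : rr ∉ GTBox.rnames Tc) (hrr₃ : ∀ x y, (rr, x, y) ∉ q.role)
    (Cq : ELC C R)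
    (hCq : ∀ (D : Type) (cI : C → Set D) (rI : R → Set (D × D)) (d : D),
      d ∈ ELC.ext cI rI Cq → ∃ f : V → D, q.Match cI rI f ∧ f (q.ans 0) = d)
    (T : GTBox C R)
    (hT : T = (ELC.ex (DLRole.name rr) (ELC.name AA), ELC.name AA) ::
              (ELC.inter (ELC.name AA) (ELC.name Astar), Cq) :: Tc)
    (s : Sig C R)
    (hs : s.concs = insert AA sc.concs ∧ s.roles = insert rr sc.roles)
    (Wt : PseudoTree I C R) (a₀ : I) (hWcore : Wt.core = {a₀})
    (hWsig : Wt.toABox.InSig sc)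
    (hWcons : ConsistentWith (GTBox.sem Tc) Wt.toABox)
    (hWpos : CertConc (GTBox.sem Tc) Wt.toABox Astar a₀)
    (hWneg : ¬ CertAns (GTBox.sem Tc) Wt.toABox q (fun _ => a₀))
    (path : ℕ → I) (hpath0 : path 0 = a₀) (hpathinj : Function.Injective path)
    (hpathfresh : ∀ i : ℕ, i ≠ 0 → path i ∉ Wt.toABox.Ind) :
    (¬ FORewritable I (GTBox.sem T) s q) ∧
    ∀ k : ℕ, 1 ≤ k →
      CertAns (GTBox.sem T)
        (⟨Wt.conc ∪ {(AA, path k)},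
          Wt.role ∪ {p | ∃ i < k, p = (rr, path i, path (i + 1))}⟩ : ABox I C R)
        q (fun _ => a₀) ∧
      ¬ CertAns (GTBox.sem T)
        (⟨Wt.conc,
          Wt.role ∪ {p | ∃ i, i + 1 < k ∧ p = (rr, path i, path (i + 1))}⟩ : ABox I C R)
        q (fun _ => a₀) :=
  reduction_to_non_fo_rewritability_general Tc sc q hconn Astar AA rr hAA₁ hAA₂ hAA₃ hrr₂ hrr₃ Cq
    hCq T hT s hs Wt a₀ hWsig hWpos hWneg path hpath0 hpathinj hpathfresh
end
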